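/- For i = 0,…,⌊n/2⌋, ℓ = i,…,n−i, k = 0,…,n and r = 1,…,d_i, one has J_{k,ℓ} u_{i,r}^ℓ = δ_{i,0} [n choose k]_q^{1/2} [n choose ℓ]_q^{1/2} u_{0,1}^k, where δ_{i,0} is the Kronecker delta. -/

import Mathlib

open Matrix

/-- The Gaussian binomial coefficient `[a choose b]_q`, as a real number:
`∏_{i=0}^{b-1} (q^(a-i)-1)/(q^(b-i)-1)` for `a, b ≥ 0`, and `0` if `a < 0` or `b < 0`. -/
noncomputable def gbinom (q : ℝ) (a b : ℤ) : ℝ :=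
  if 0 ≤ a ∧ 0 ≤ b then
    ∏ i ∈ Finset.range b.toNat, (q ^ (a - i) - 1) / (q ^ (b - i) - 1)
  else 0

/-- The matrix `W_{k,ℓ}` on `L(V) × L(V)`: `(W_{k,ℓ})_{x,y} = 1` if `dim x = k`, `dim y = ℓ`
and `dim (x ⊓ y) = min k ℓ`, and `0` otherwise.  (Indices in `ℤ`, so that `W_{-1,0} = 0`.) -/
noncomputable def Wmat (K V : Type*) [Field K] [AddCommGroup V] [Module K V] (k l : ℤ) :
    Matrix (Submodule K V) (Submodule K V) ℝ :=
  Matrix.of fun x y =>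
    if (Module.finrank K x : ℤ) = k ∧ (Module.finrank K y : ℤ) = l ∧
        (Module.finrank K ↥(x ⊓ y) : ℤ) = min k l then 1 else 0

/-- The all-ones matrix `J` on `L(V) × L(V)`. -/
noncomputable def Jmat (K V : Type*) [Field K] [AddCommGroup V] [Module K V] :
    Matrix (Submodule K V) (Submodule K V) ℝ :=
  Matrix.of fun _ _ => 1

/-- `J_{k,ℓ} := I_k J I_ℓ`, where `I_k := W_{k,k}`. -/
noncomputable def JJmat (K V : Type*) [Field K] [AddCommGroup V] [Module K V]
    [Fintype (Submodule K V)] (k l : ℤ) : Matrix (Submodule K V) (Submodule K V) ℝ :=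
  Wmat K V k k * Jmat K V * Wmat K V l l

/-- The subspace `U_i ⊆ ℝ^{L(V)}` of vectors supported on `L_i(V)` and killed by
`W_{i-1,i}`. -/
noncomputable def Usub (K V : Type*) [Field K] [AddCommGroup V] [Module K V]
    [Fintype (Submodule K V)] (i : ℕ) : Submodule ℝ (Submodule K V → ℝ) :=
  LinearMap.ker (Matrix.mulVecLin (Wmat K V ((i : ℤ) - 1) (i : ℤ))) ⊓
    ⨅ x ∈ {x : Submodule K V | Module.finrank K x ≠ i},
      LinearMap.ker (LinearMap.proj (R := ℝ) (φ := fun _ : Submodule K V => ℝ) x)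

/-- The vector `u^k := q^{-i(k-i)/2} [n-2i choose k-i]_q^{-1/2} W_{k,i} u` built from a
vector `u ∈ U_i`, with the convention that it is `0` if `k < i` or `k > n - i`. -/
noncomputable def ulift' (K V : Type*) [Field K] [AddCommGroup V] [Module K V]
    [Fintype (Submodule K V)] (q : ℝ) (n i k : ℕ) (v : Submodule K V → ℝ) :
    Submodule K V → ℝ :=
  if i ≤ k ∧ k ≤ n - i then
    ((Real.sqrt q) ^ (-(i * ((k : ℤ) - i))) *
      (Real.sqrt (gbinom q ((n : ℤ) - 2 * i) ((k : ℤ) - i)))⁻¹) •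
      (Wmat K V k i).mulVec v
  else 0

/-
`J_{k,ℓ} v = (∑_{dim z = ℓ} v z) • 1_{L_k}`, so only the sum of `u^ℓ_{i,r}` over `L_ℓ(V)` matters.
The column sums of `W_{m,i}` at an `i`-space `x` count the `m`-spaces containing `x` (`m ≥ i`) or
contained in `x` (`m ≤ i`); these numbers, `[n-i choose m-i]_q` and `[i choose m]_q`, do not depend
on `x`, because `[a choose m]_q` counts the `m`-dimensional subspaces of `𝔽_q^a` (double count
linearly independent `m`-tuples). Hence the sum of `W_{ℓ,i} u` over `L_ℓ(V)` is a multiple of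
`∑ u`, and for `i ≥ 1` that vanishes: `W_{i-1,i} u = 0` and the column sums `[i choose i-1]_q` are
nonzero. For `i = 0`, orthonormal vectors supported on `{0}` force `r = 1`,
`u^k_{0,1} = [n choose k]_q^{-1/2} u_{0,1}(0) • 1_{L_k}`, and `|L_ℓ(V)| = [n choose ℓ]_q`.
-/

open Module Finset Matrix

lemma gbinom_natCast {q : ℝ} (hq : q ≠ 0) (a b : ℕ) :
    gbinom q a b = ∏ i ∈ range b, (q ^ a - q ^ i) / (q ^ b - q ^ i) := by
  simp only [gbinom, Nat.cast_nonneg, and_self, if_true, Int.toNat_natCast]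
  refine prod_congr rfl fun i _ => ?_
  simp only [zpow_sub₀ hq, zpow_natCast]
  rw [div_sub_one (pow_ne_zero _ hq), div_sub_one (pow_ne_zero _ hq),
    div_div_div_cancel_right₀ (pow_ne_zero _ hq)]

lemma gbinom_pos {q : ℝ} (hq : 1 < q) {a b : ℕ} (hba : b ≤ a) : 0 < gbinom q a b := by
  rw [gbinom_natCast (by positivity)]
  refine prod_pos fun i hi => div_pos ?_ ?_ <;> rw [sub_pos] <;>
    exact pow_lt_pow_right₀ hq (by rw [mem_range] at hi; omega)

lemma gbinom_eq_zero_of_lt {q : ℝ} (hq : q ≠ 0) {a b : ℕ} (hab : a < b) : gbinom q a b = 0 := by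
  rw [gbinom_natCast hq]
  exact prod_eq_zero (mem_range.mpr hab) (by simp)

section SubspaceCount

variable {K W : Type*} [Field K] [AddCommGroup W] [Module K W]

lemma Submodule.finrank_inf_eq_left_iff {x y : Submodule K W} [FiniteDimensional K x] :
    finrank K ↥(x ⊓ y) = finrank K x ↔ x ≤ y :=
  ⟨fun h => inf_eq_left.mp (Submodule.eq_of_le_of_finrank_eq inf_le_left h),
    fun h => by rw [inf_eq_left.mpr h]⟩

def subspacesLeEquiv (p : Submodule K W) (m : ℕ) :
    {z : Submodule K W // z ≤ p ∧ finrank K z = m} ≃ {w : Submodule K p // finrank K w = m} where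
  toFun z := ⟨z.1.comap p.subtype, by
    rw [← Submodule.finrank_map_subtype_eq, Submodule.map_comap_subtype, inf_eq_right.mpr z.2.1,
      z.2.2]⟩
  invFun w := ⟨w.1.map p.subtype, Submodule.map_subtype_le _ _,
    by rw [Submodule.finrank_map_subtype_eq, w.2]⟩
  left_inv z := Subtype.ext (by simp [Submodule.map_comap_subtype, z.2.1])
  right_inv w := Subtype.ext (Submodule.comap_map_eq_of_injective p.injective_subtype _)

variable [FiniteDimensional K W]

lemma finrank_map_mkQ_add_finrank {p z : Submodule K W} (h : p ≤ z) :
    finrank K (z.map p.mkQ) + finrank K p = finrank K z := by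
  have := LinearMap.finrank_range_add_finrank_ker (p.mkQ.domRestrict z)
  rwa [LinearMap.range_domRestrict, LinearMap.ker_domRestrict, Submodule.ker_mkQ,
    (Submodule.comapSubtypeEquivOfLe h).finrank_eq] at this

def subspacesGeEquiv (p : Submodule K W) (m : ℕ) :
    {z : Submodule K W // p ≤ z ∧ finrank K z = m + finrank K p} ≃
      {w : Submodule K (W ⧸ p) // finrank K w = m} where
  toFun z := ⟨z.1.map p.mkQ, by have := finrank_map_mkQ_add_finrank z.2.1; omega⟩
  invFun w := ⟨w.1.comap p.mkQ, Submodule.le_comap_mkQ p w.1, by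
    have := finrank_map_mkQ_add_finrank (Submodule.le_comap_mkQ p w.1)
    rw [Submodule.map_comap_eq_of_surjective p.mkQ_surjective, w.2] at this
    omega⟩
  left_inv z := Subtype.ext (by simp [Submodule.comap_map_mkQ, z.2.1])
  right_inv w := Subtype.ext (Submodule.map_comap_eq_of_surjective p.mkQ_surjective _)

def linearIndependentSpanEqEquiv (m : ℕ) (x : {x : Submodule K W // finrank K x = m}) :
    {s : {s : Fin m → W // LinearIndependent K s} // Submodule.span K (Set.range s.1) = x.1} ≃
      {t : Fin m → x.1 // LinearIndependent K t} where
  toFun s := ⟨fun j => ⟨s.1.1 j, by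
      simpa only [s.2, SetLike.mem_coe] using
        Submodule.subset_span (R := K) (Set.mem_range_self (f := s.1.1) j)⟩,
    .of_comp x.1.subtype s.1.2⟩
  invFun t := ⟨⟨x.1.subtype ∘ t.1, t.2.map' _ (Submodule.ker_subtype _)⟩, by
    rw [Set.range_comp, Submodule.span_image,
      t.2.span_eq_top_of_card_eq_finrank' (by rw [Fintype.card_fin, x.2]),
      Submodule.map_top, Submodule.range_subtype]⟩
  left_inv _ := rfl
  right_inv _ := rfl

variable [Fintype K]

lemma natCard_finrank_eq_mul_prod (m : ℕ) :
    Nat.card {x : Submodule K W // finrank K x = m} *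
        ∏ i ∈ range m, (Fintype.card K ^ m - Fintype.card K ^ i) =
      Nat.card {s : Fin m → W // LinearIndependent K s} := by
  have : Finite W := Module.finite_of_finite K
  let := Fintype.ofFinite {x : Submodule K W // finrank K x = m}
  let span : {s : Fin m → W // LinearIndependent K s} → {x : Submodule K W // finrank K x = m} :=
    fun s => ⟨Submodule.span K (Set.range s.1), by rw [finrank_span_eq_card s.2, Fintype.card_fin]⟩
  rw [← Nat.card_congr (Equiv.sigmaFiberEquiv span), Nat.card_sigma]
  have hfiber (x : {x : Submodule K W // finrank K x = m}) :
      Nat.card {s // span s = x} = ∏ i ∈ range m, (Fintype.card K ^ m - Fintype.card K ^ i) := by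
    rw [Nat.card_congr ((Equiv.subtypeEquivRight fun s => Subtype.ext_iff).trans
      (linearIndependentSpanEqEquiv m x)), card_linearIndependent x.2.ge, x.2,
      Fin.prod_univ_eq_prod_range (fun i => Fintype.card K ^ m - Fintype.card K ^ i)]
  simp only [hfiber, sum_const, card_univ, smul_eq_mul, Nat.card_eq_fintype_card]

theorem natCard_finrank_eq_gbinom (m : ℕ) :
    (Nat.card {x : Submodule K W // finrank K x = m} : ℝ) =
      gbinom (Fintype.card K) (finrank K W) m := by
  have hq : 1 < Fintype.card K := Fintype.one_lt_card
  have hq0 : (Fintype.card K : ℝ) ≠ 0 := by positivity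
  have : Finite W := Module.finite_of_finite K
  by_cases hm : m ≤ finrank K W
  · have hcast {a : ℕ} (ha : m ≤ a) :
        ((∏ i ∈ range m, (Fintype.card K ^ a - Fintype.card K ^ i) : ℕ) : ℝ) =
          ∏ i ∈ range m, ((Fintype.card K : ℝ) ^ a - (Fintype.card K : ℝ) ^ i) := by
      push_cast [Nat.cast_prod]
      refine prod_congr rfl fun i hi => ?_
      rw [Nat.cast_sub (Nat.pow_le_pow_right hq.le (by rw [mem_range] at hi; omega))]
      push_cast; rfl
    have hcount := congrArg (Nat.cast (R := ℝ)) (natCard_finrank_eq_mul_prod (K := K) (W := W) m)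
    rw [card_linearIndependent hm, Fin.prod_univ_eq_prod_range
      (fun i => Fintype.card K ^ finrank K W - Fintype.card K ^ i), Nat.cast_mul, hcast le_rfl,
      hcast hm] at hcount
    rw [gbinom_natCast hq0, prod_div_distrib, eq_div_iff, hcount]
    refine prod_ne_zero_iff.mpr fun i hi =>
      (sub_pos.mpr (pow_lt_pow_right₀ (by exact_mod_cast hq) (mem_range.mp hi))).ne'
  · have : IsEmpty {x : Submodule K W // finrank K x = m} :=
      ⟨fun x => hm (x.2 ▸ Submodule.finrank_le x.1)⟩
    rw [Nat.card_of_isEmpty, Nat.cast_zero, gbinom_eq_zero_of_lt hq0 (not_le.mp hm)]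

end SubspaceCount

lemma subsingleton_of_orthonormal_of_support_singleton {α ι : Type*} [DecidableEq α] [Fintype ι]
    (u : α → ι → ℝ) (x₀ : ι) (hsupp : ∀ r, ∀ x ≠ x₀, u r x = 0)
    (horth : ∀ r s, u r ⬝ᵥ u s = if r = s then 1 else 0) : Subsingleton α := by
  have hdot (r s : α) : u r ⬝ᵥ u s = u r x₀ * u s x₀ :=
    sum_eq_single x₀ (fun x _ hx => by rw [hsupp r x hx, zero_mul]) (by simp)
  refine ⟨fun r s => by_contra fun hrs => ?_⟩
  have hr := horth r r
  have hs := horth s s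
  have hrs' := horth r s
  simp only [hdot, if_pos, if_neg hrs] at hr hs hrs'
  nlinarith

section Matrices

variable (K V : Type*) [Field K] [AddCommGroup V] [Module K V]

noncomputable def finrankIndicator (k : ℤ) : Submodule K V → ℝ :=
  fun x => if (finrank K x : ℤ) = k then 1 else 0

variable {K V}

lemma Jmat_mulVec [Fintype (Submodule K V)] (v : Submodule K V → ℝ) :
    Jmat K V *ᵥ v = fun _ => ∑ x, v x := by
  ext x
  simp [Jmat, mulVec, dotProduct]

lemma vecMul_finrankIndicator_Wmat_apply [Fintype (Submodule K V)] (m i : ℕ)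
    (x : Submodule K V) :
    (finrankIndicator K V m ᵥ* Wmat K V m i) x = if finrank K x = i then
      (Nat.card {z : Submodule K V // finrank K z = m ∧ finrank K ↥(z ⊓ x) = min m i} : ℝ)
    else 0 := by
  split_ifs with hx
  · simp only [vecMul, dotProduct, finrankIndicator, Wmat, of_apply, hx, ← Nat.cast_min,
      Nat.cast_inj, true_and, mul_ite, mul_one, mul_zero, Nat.card_eq_fintype_card,
      Fintype.card_subtype, card_filter, Nat.cast_sum]
    refine sum_congr rfl fun z _ => ?_
    split_ifs <;> simp_all
  · simp [vecMul, dotProduct, finrankIndicator, Wmat, hx]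

variable [FiniteDimensional K V]

lemma Wmat_self_apply (k : ℤ) (x y : Submodule K V) :
    Wmat K V k k x y = if x = y then finrankIndicator K V k x else 0 := by
  split_ifs with hxy
  · subst hxy
    rw [Wmat, of_apply, inf_idem, min_self]
    simp [finrankIndicator]
  · simp only [Wmat, of_apply, min_self, ite_eq_right_iff, one_ne_zero, imp_false, not_and]
    intro hx hy hxy'
    refine hxy (le_antisymm ?_ ?_)
    · exact Submodule.finrank_inf_eq_left_iff.mp (by omega)
    · exact Submodule.finrank_inf_eq_left_iff.mp (by rw [inf_comm]; omega)

variable [Fintype (Submodule K V)]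

lemma Wmat_self_mulVec (k : ℤ) (v : Submodule K V → ℝ) :
    Wmat K V k k *ᵥ v = finrankIndicator K V k * v := by
  ext x
  simp [mulVec, dotProduct, Wmat_self_apply]

lemma JJmat_mulVec (k l : ℤ) (v : Submodule K V → ℝ) :
    JJmat K V k l *ᵥ v = (finrankIndicator K V l ⬝ᵥ v) • finrankIndicator K V k := by
  rw [JJmat, ← mulVec_mulVec, ← mulVec_mulVec, Wmat_self_mulVec, Jmat_mulVec, Wmat_self_mulVec]
  ext x
  simp [dotProduct, mul_comm]

variable [Fintype K]

lemma finrankIndicator_dotProduct_self (m : ℕ) :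
    finrankIndicator K V m ⬝ᵥ finrankIndicator K V m =
      gbinom (Fintype.card K) (finrank K V) m := by
  classical
  rw [← natCard_finrank_eq_gbinom, Nat.card_eq_fintype_card, Fintype.card_subtype]
  simp [dotProduct, finrankIndicator, ← ite_and, sum_boole]

lemma vecMul_finrankIndicator_Wmat_of_le {m i : ℕ} (hmi : m ≤ i) :
    finrankIndicator K V m ᵥ* Wmat K V m i =
      gbinom (Fintype.card K) i m • finrankIndicator K V i := by
  ext x
  rw [vecMul_finrankIndicator_Wmat_apply, min_eq_left hmi]
  simp only [Pi.smul_apply, finrankIndicator, Nat.cast_inj, smul_eq_mul, mul_ite, mul_one,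
    mul_zero]
  split_ifs with hx
  · subst hx
    have hcond (z : Submodule K V) :
        finrank K z = m ∧ finrank K ↥(z ⊓ x) = m ↔ z ≤ x ∧ finrank K z = m :=
      ⟨fun ⟨hz, hzx⟩ => ⟨Submodule.finrank_inf_eq_left_iff.mp (hzx.trans hz.symm), hz⟩,
        fun ⟨hzx, hz⟩ => ⟨hz, by rw [inf_eq_left.mpr hzx, hz]⟩⟩
    rw [Nat.card_congr ((Equiv.subtypeEquivRight hcond).trans (subspacesLeEquiv x m)),
      natCard_finrank_eq_gbinom]
  · rfl

lemma vecMul_finrankIndicator_Wmat_of_ge {m i : ℕ} (him : i ≤ m) :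
    finrankIndicator K V m ᵥ* Wmat K V m i =
      gbinom (Fintype.card K) (finrank K V - i : ℕ) (m - i : ℕ) • finrankIndicator K V i := by
  ext x
  rw [vecMul_finrankIndicator_Wmat_apply, min_eq_right him]
  simp only [Pi.smul_apply, finrankIndicator, Nat.cast_inj, smul_eq_mul, mul_ite, mul_one,
    mul_zero]
  split_ifs with hx
  · subst hx
    have hcond (z : Submodule K V) : finrank K z = m ∧ finrank K ↥(z ⊓ x) = finrank K x ↔
        x ≤ z ∧ finrank K z = m - finrank K x + finrank K x := by
      rw [inf_comm, Submodule.finrank_inf_eq_left_iff, Nat.sub_add_cancel him, and_comm]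
    rw [Nat.card_congr ((Equiv.subtypeEquivRight hcond).trans (subspacesGeEquiv x _)),
      natCard_finrank_eq_gbinom, Submodule.finrank_quotient]
  · rfl

end Matrices

section Usub

variable {K V : Type*} [Field K] [AddCommGroup V] [Module K V] [Fintype (Submodule K V)]
  {i : ℕ} {u : Submodule K V → ℝ}

lemma apply_eq_zero_of_mem_Usub (hu : u ∈ Usub K V i) {x : Submodule K V}
    (hx : finrank K x ≠ i) : u x = 0 := by
  have h := (Submodule.mem_inf.mp hu).2
  simp only [Submodule.mem_iInf] at h
  simpa using h x hx

lemma Wmat_mulVec_eq_zero_of_mem_Usub (hu : u ∈ Usub K V i) :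
    Wmat K V (i - 1) i *ᵥ u = 0 :=
  (Submodule.mem_inf.mp hu).1

lemma finrankIndicator_dotProduct_eq_zero_of_mem_Usub [Fintype K] [FiniteDimensional K V]
    (hu : u ∈ Usub K V i) (hi : i ≠ 0) : finrankIndicator K V i ⬝ᵥ u = 0 := by
  have h := congrArg (finrankIndicator K V (i - 1 : ℕ) ⬝ᵥ ·) (Wmat_mulVec_eq_zero_of_mem_Usub hu)
  simp only [dotProduct_zero, dotProduct_mulVec] at h
  rw [show ((i : ℤ) - 1) = (i - 1 : ℕ) by omega,
    vecMul_finrankIndicator_Wmat_of_le (Nat.sub_le i 1), smul_dotProduct, smul_eq_mul] at h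
  refine (mul_eq_zero.mp h).resolve_left (gbinom_pos ?_ (Nat.sub_le i 1)).ne'
  exact_mod_cast Fintype.one_lt_card

end Usub

section SupportedAtBot

variable {K V : Type*} [Field K] [AddCommGroup V] [Module K V] [Fintype (Submodule K V)]
  {u : Submodule K V → ℝ}

lemma Wmat_mulVec_of_support_bot (hu : ∀ x ≠ ⊥, u x = 0) (m : ℕ) :
    Wmat K V m 0 *ᵥ u = u ⊥ • finrankIndicator K V m := by
  ext y
  rw [mulVec, dotProduct, sum_eq_single ⊥ (fun x _ hx => by rw [hu x hx, mul_zero]) (by simp)]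
  simp [Wmat, finrankIndicator, mul_comm]

lemma ulift'_zero_of_support_bot (hu : ∀ x ≠ ⊥, u x = 0) (q : ℝ) {n m : ℕ} (hm : m ≤ n) :
    ulift' K V q n 0 m u = ((√(gbinom q n m))⁻¹ * u ⊥) • finrankIndicator K V m := by
  rw [ulift', if_pos ⟨Nat.zero_le _, by omega⟩, Nat.cast_zero, Wmat_mulVec_of_support_bot hu,
    smul_smul]
  simp

end SupportedAtBot

theorem JJmat_mulVec_ulift_general
    {K V : Type*} [Field K] [Fintype K] [AddCommGroup V] [Module K V] [FiniteDimensional K V]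
    [Fintype (Submodule K V)]
    (n : ℕ) (hV : Module.finrank K V = n)
    (d : ℕ → ℕ) (h0 : 0 < d 0)
    (u : (i : ℕ) → Fin (d i) → (Submodule K V → ℝ))
    (humem : ∀ i, i ≤ n / 2 → ∀ r, u i r ∈ Usub K V i)
    (huorth : ∀ i, i ≤ n / 2 → ∀ r s : Fin (d i),
      u i r ⬝ᵥ u i s = if r = s then 1 else 0)
    (i l k : ℕ) (hi : i ≤ n / 2) (hil : i ≤ l) (hln : l ≤ n - i) (hk : k ≤ n)
    (r : Fin (d i)) :
    (JJmat K V k l).mulVec (ulift' K V (Fintype.card K) n i l (u i r)) =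
      ((if i = 0 then (1 : ℝ) else 0) *
          Real.sqrt (gbinom (Fintype.card K) (n : ℤ) (k : ℤ)) *
          Real.sqrt (gbinom (Fintype.card K) (n : ℤ) (l : ℤ))) •
        ulift' K V (Fintype.card K) n 0 k (u 0 ⟨0, h0⟩) := by
  rcases eq_or_ne i 0 with rfl | hi0
  · have hbot (r : Fin (d 0)) : ∀ x ≠ ⊥, u 0 r x = 0 := fun x hx =>
      apply_eq_zero_of_mem_Usub (humem 0 (Nat.zero_le _) r) (by simpa using hx)
    have := subsingleton_of_orthonormal_of_support_singleton (u 0) ⊥ hbot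
      (huorth 0 (Nat.zero_le _))
    obtain rfl : r = ⟨0, h0⟩ := Subsingleton.elim _ _
    have hl : 0 < gbinom (Fintype.card K) n l :=
      gbinom_pos (by exact_mod_cast Fintype.one_lt_card) (by omega)
    rw [ulift'_zero_of_support_bot (hbot _) _ (by omega),
      ulift'_zero_of_support_bot (hbot _) _ hk, JJmat_mulVec, dotProduct_smul,
      finrankIndicator_dotProduct_self, hV, smul_smul, smul_eq_mul, if_pos rfl, one_mul]
    congr 1
    have hk' : 0 < gbinom (Fintype.card K) n k :=
      gbinom_pos (by exact_mod_cast Fintype.one_lt_card) hk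
    field_simp
    rw [Real.sq_sqrt hl.le, mul_comm]
  · rw [ulift', if_pos ⟨hil, hln⟩, JJmat_mulVec, dotProduct_smul, dotProduct_mulVec,
      vecMul_finrankIndicator_Wmat_of_ge hil, smul_dotProduct,
      finrankIndicator_dotProduct_eq_zero_of_mem_Usub (humem i hi r) hi0]
    simp [hi0]

/-- For `0 ≤ i ≤ ⌊n/2⌋`, `i ≤ ℓ ≤ n - i`, `0 ≤ k ≤ n` and `r < d i`:
`J_{k,ℓ} u_{i,r}^ℓ = δ_{i,0} [n choose k]_q^{1/2} [n choose ℓ]_q^{1/2} u_{0,1}^k`,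
where `u_{0,1}` is the first basis vector of the (one-dimensional) space `U_0`. -/
theorem JJmat_mulVec_ulift
    {K V : Type*} [Field K] [Fintype K] [AddCommGroup V] [Module K V] [FiniteDimensional K V]
    [Fintype (Submodule K V)]
    (n : ℕ) (hV : Module.finrank K V = n)
    (d : ℕ → ℕ) (hd : ∀ i, d i = Module.finrank ℝ (Usub K V i)) (h0 : 0 < d 0)
    (u : (i : ℕ) → Fin (d i) → (Submodule K V → ℝ))
    (humem : ∀ i, i ≤ n / 2 → ∀ r, u i r ∈ Usub K V i)
    (huorth : ∀ i, i ≤ n / 2 → ∀ r s : Fin (d i),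
      u i r ⬝ᵥ u i s = if r = s then 1 else 0)
    (huspan : ∀ i, i ≤ n / 2 →
      Submodule.span ℝ (Set.range (u i)) = Usub K V i)
    (i l k : ℕ) (hi : i ≤ n / 2) (hil : i ≤ l) (hln : l ≤ n - i) (hk : k ≤ n)
    (r : Fin (d i)) :
    (JJmat K V k l).mulVec (ulift' K V (Fintype.card K) n i l (u i r)) =
      ((if i = 0 then (1 : ℝ) else 0) *
          Real.sqrt (gbinom (Fintype.card K) (n : ℤ) (k : ℤ)) *
          Real.sqrt (gbinom (Fintype.card K) (n : ℤ) (l : ℤ))) •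
        ulift' K V (Fintype.card K) n 0 k (u 0 ⟨0, h0⟩) :=
  JJmat_mulVec_ulift_general n hV d h0 u humem huorth i l k hi hil hln hk r
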